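/- Let s : (0,1) → [0,∞) be a probability density with ∫₀¹ s(t) dt = 1, set σ_i := ∫_{(i−1)/n}^{i/n} s(t) dt for i = 1, ..., n, let P(σ) be the permutahedron of σ, let h(l) := max_{λ ∈ P(σ)} ⟨λ, l⟩, and let u_n := 𝟏/n ∈ ℝⁿ. Define Ω₁(λ) := Σ_{i=1}^n λ_i log(n λ_i) and Ω₂(λ) := (1/2)‖λ − u_n‖₂². Then for every ν ≥ 0 and l ∈ ℝⁿ: 0 ≤ h(l) − h_{νΩ₁}(l) ≤ ν Ω₁(σ) ≤ ν ∫₀¹ s(t) ln s(t) dt = ν KL(s‖u), and 0 ≤ h(l) − h_{νΩ₂}(l) ≤ (ν/2)‖σ − u_n‖₂² ≤ (ν/(2n)) ∫₀¹ (s(t) − 1)² dt = (ν/(2n)) χ²(s‖u), where h_{νΩ}(l) := max_{λ ∈ P(σ)} { ⟨λ, l⟩ − ν Ω(λ) } and u ≡ 1 is the uniform density on (0,1). -/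

import Mathlib

/-- The permutahedron generated by `σ`: the image of `σ` under all doubly stochastic
matrices. -/
def permutahedron {n : ℕ} (σ : Fin n → ℝ) : Set (Fin n → ℝ) :=
  {lam | ∃ P : Matrix (Fin n) (Fin n) ℝ,
    (∀ i j, P i j ∈ Set.Icc (0 : ℝ) 1) ∧ (∀ i, ∑ j, P i j = 1) ∧ (∀ j, ∑ i, P i j = 1) ∧
    lam = P.mulVec σ}

/-- The standard pairing `⟨a, b⟩ = ∑ᵢ aᵢ bᵢ` on `ℝⁿ`. -/
def dotp {n : ℕ} (a b : Fin n → ℝ) : ℝ := ∑ i, a i * b i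

/-- `h(l) = max_{λ ∈ P(σ)} ⟨λ, l⟩` (via `sSup`). -/
noncomputable def hmax {n : ℕ} (σ : Fin n → ℝ) (l : Fin n → ℝ) : ℝ :=
  sSup ((fun lam => dotp lam l) '' permutahedron σ)

/-- `h_{νΩ}(l) = max_{λ ∈ P(σ)} { ⟨λ, l⟩ − ν Ω(λ) }` (via `sSup`). -/
noncomputable def smoothedMax {n : ℕ} (σ : Fin n → ℝ) (Om : (Fin n → ℝ) → ℝ) (ν : ℝ)
    (l : Fin n → ℝ) : ℝ :=
  sSup ((fun lam => dotp lam l - ν * Om lam) '' permutahedron σ)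

/-- The centered negative entropy `Ω₁(λ) = ∑ᵢ λᵢ log(n λᵢ)`. -/
noncomputable def Om1 {n : ℕ} (lam : Fin n → ℝ) : ℝ := ∑ i, lam i * Real.log (n * lam i)

/-- The centered squared Euclidean norm `Ω₂(λ) = ½‖λ − 𝟏/n‖₂²`. -/
noncomputable def Om2 {n : ℕ} (lam : Fin n → ℝ) : ℝ := (∑ i, (lam i - 1 / n) ^ 2) / 2

/-!
Each point of the permutahedron is a doubly stochastic average of the coordinates of `σ`.
Both regularizers are sums of a convex function of the coordinates, so by Jensen they are
maximized over `P(σ)` at `σ`; being nonnegative there as well, subtracting `νΩ` lowers the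
support function by an amount between `0` and `νΩ(σ)`. The bounds on `Ω(σ)` come from Jensen's
inequality for the average of `s` over each cell `[i/n, (i+1)/n]`, summed over the cells.
-/

open MeasureTheory Set

section Permutahedron

variable {n : ℕ} {σ lam : Fin n → ℝ}

lemma self_mem_permutahedron (σ : Fin n → ℝ) : σ ∈ permutahedron σ :=
  ⟨1, fun i j => by by_cases h : i = j <;> simp [Matrix.one_apply, h],
    fun i => by simp [Matrix.one_apply], fun j => by simp [Matrix.one_apply],
    (Matrix.one_mulVec σ).symm⟩

lemma apply_mem_of_mem_permutahedron {S : Set ℝ} (hS : Convex ℝ S) (hσS : ∀ j, σ j ∈ S)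
    (h : lam ∈ permutahedron σ) (i : Fin n) : lam i ∈ S := by
  obtain ⟨P, hP, hProw, -, rfl⟩ := h
  exact hS.sum_mem (fun j _ => (hP i j).1) (hProw i) fun j _ => hσS j

lemma sum_apply_le_of_mem_permutahedron {S : Set ℝ} {g : ℝ → ℝ} (hg : ConvexOn ℝ S g)
    (hσS : ∀ j, σ j ∈ S) (h : lam ∈ permutahedron σ) :
    ∑ i, g (lam i) ≤ ∑ j, g (σ j) := by
  obtain ⟨P, hP, hProw, hPcol, rfl⟩ := h
  calc ∑ i, g (P.mulVec σ i) ≤ ∑ i, ∑ j, P i j * g (σ j) :=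
        Finset.sum_le_sum fun i _ => by
          simpa only [smul_eq_mul, Matrix.mulVec, dotProduct] using
            hg.map_sum_le (fun j _ => (hP i j).1) (hProw i) fun j _ => hσS j
    _ = ∑ j, g (σ j) := by
        rw [Finset.sum_comm]
        simp only [← Finset.sum_mul, hPcol, one_mul]

lemma sum_eq_of_mem_permutahedron (h : lam ∈ permutahedron σ) : ∑ i, lam i = ∑ j, σ j := by
  obtain ⟨P, -, -, hPcol, rfl⟩ := h
  simp only [Matrix.mulVec, dotProduct]
  rw [Finset.sum_comm]
  simp only [← Finset.sum_mul, hPcol, one_mul]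

lemma bddAbove_dotp_image_permutahedron (σ l : Fin n → ℝ) :
    BddAbove ((fun lam => dotp lam l) '' permutahedron σ) := by
  set M := ∑ j, |σ j|
  have hσM : ∀ j, σ j ∈ Icc (-M) M := fun j =>
    abs_le.mp (Finset.single_le_sum (fun k _ => abs_nonneg (σ k)) (Finset.mem_univ j))
  refine ⟨∑ i, M * |l i|, ?_⟩
  rintro _ ⟨lam, hlam, rfl⟩
  refine Finset.sum_le_sum fun i _ => ?_
  have hlamM := abs_le.mpr (apply_mem_of_mem_permutahedron (convex_Icc _ _) hσM hlam i)
  calc lam i * l i ≤ |lam i| * |l i| := by rw [← abs_mul]; exact le_abs_self _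
    _ ≤ M * |l i| := by gcongr

end Permutahedron

lemma sSup_image_sub_sSup_image_sub_mem_Icc {α : Type*} {K : Set α} (hK : K.Nonempty)
    {f g : α → ℝ} (hf : BddAbove (f '' K)) {c : ℝ} (hg0 : ∀ x ∈ K, 0 ≤ g x)
    (hgc : ∀ x ∈ K, g x ≤ c) :
    sSup (f '' K) - sSup ((fun x => f x - g x) '' K) ∈ Icc 0 c := by
  have hfg : BddAbove ((fun x => f x - g x) '' K) := by
    obtain ⟨M, hM⟩ := hf
    refine ⟨M, ?_⟩
    rintro _ ⟨x, hx, rfl⟩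
    linarith [hM (mem_image_of_mem f hx), hg0 x hx]
  constructor
  · refine sub_nonneg.mpr (csSup_le (hK.image _) ?_)
    rintro _ ⟨x, hx, rfl⟩
    linarith [le_csSup hf (mem_image_of_mem f hx), hg0 x hx]
  · refine sub_le_iff_le_add.mpr (csSup_le (hK.image _) ?_)
    rintro _ ⟨x, hx, rfl⟩
    linarith [le_csSup hfg (mem_image_of_mem (fun x => f x - g x) hx), hgc x hx]

lemma hmax_sub_smoothedMax_mem_Icc {n : ℕ} {σ : Fin n → ℝ} {Om : (Fin n → ℝ) → ℝ}
    (hOm0 : ∀ lam ∈ permutahedron σ, 0 ≤ Om lam)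
    (hOmσ : ∀ lam ∈ permutahedron σ, Om lam ≤ Om σ) {ν : ℝ} (hν : 0 ≤ ν) (l : Fin n → ℝ) :
    hmax σ l - smoothedMax σ Om ν l ∈ Icc 0 (ν * Om σ) :=
  sSup_image_sub_sSup_image_sub_mem_Icc ⟨σ, self_mem_permutahedron σ⟩
    (bddAbove_dotp_image_permutahedron σ l)
    (fun lam hlam => mul_nonneg hν (hOm0 lam hlam))
    (fun lam hlam => mul_le_mul_of_nonneg_left (hOmσ lam hlam) hν)

lemma convexOn_mul_log_const_mul {c : ℝ} (hc : c ≠ 0) :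
    ConvexOn ℝ (Ici 0) fun x : ℝ => x * Real.log (c * x) := by
  have h : (fun x : ℝ => x * Real.log (c * x)) = fun x => x * Real.log x + Real.log c * x := by
    funext x
    rcases eq_or_ne x 0 with rfl | hx
    · simp
    · rw [Real.log_mul hc hx]; ring
  rw [h]
  exact Real.convexOn_mul_log.add ((LinearMap.mul ℝ ℝ (Real.log c)).convexOn (convex_Ici 0))

lemma convexOn_sub_sq (c : ℝ) : ConvexOn ℝ univ fun x : ℝ => (x - c) ^ 2 := by
  simpa [Function.comp_def, neg_add_eq_sub] using
    (even_two.convexOn_pow (𝕜 := ℝ)).translate_right (-c)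

lemma Om1_nonneg {n : ℕ} [NeZero n] {lam : Fin n → ℝ} (h0 : ∀ i, 0 ≤ lam i)
    (h1 : ∑ i, lam i = 1) : 0 ≤ Om1 lam := by
  have hn : (0 : ℝ) < n := Nat.cast_pos.mpr (NeZero.pos n)
  -- Gibbs: `x - 1/n ≤ x log (n x)`, and the left side sums to zero over the simplex.
  have hgibbs : ∀ i, lam i - (n : ℝ)⁻¹ ≤ lam i * Real.log (n * lam i) := fun i => by
    have := Real.self_sub_one_le_mul_log (mul_nonneg hn.le (h0 i))
    rw [← mul_le_mul_iff_of_pos_left hn]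
    calc (n : ℝ) * (lam i - (n : ℝ)⁻¹) = n * lam i - 1 := by field_simp
      _ ≤ _ := by linarith
  calc (0 : ℝ) = ∑ i, (lam i - (n : ℝ)⁻¹) := by
        rw [Finset.sum_sub_distrib, h1]; simp [Finset.card_univ, hn.ne']
    _ ≤ Om1 lam := Finset.sum_le_sum fun i _ => hgibbs i

lemma Om1_le_of_mem_permutahedron {n : ℕ} [NeZero n] {σ lam : Fin n → ℝ} (hσ0 : ∀ j, 0 ≤ σ j)
    (h : lam ∈ permutahedron σ) : Om1 lam ≤ Om1 σ :=
  sum_apply_le_of_mem_permutahedron (convexOn_mul_log_const_mul (NeZero.ne _)) hσ0 h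

lemma Om2_le_of_mem_permutahedron {n : ℕ} {σ lam : Fin n → ℝ} (h : lam ∈ permutahedron σ) :
    Om2 lam ≤ Om2 σ :=
  div_le_div_of_nonneg_right
    (sum_apply_le_of_mem_permutahedron (convexOn_sub_sq _) (fun _ => mem_univ _) h) zero_le_two

lemma integral_Ioo_eq_intervalIntegral {f : ℝ → ℝ} {a b : ℝ} (hab : a ≤ b) :
    ∫ t in Ioo a b, f t = ∫ t in a..b, f t := by
  rw [intervalIntegral.integral_of_le hab, integral_Ioc_eq_integral_Ioo]

lemma ConvexOn.map_intervalAverage_le {S : Set ℝ} {g s : ℝ → ℝ} (hg : ConvexOn ℝ S g)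
    (hgc : ContinuousOn g S) (hS : IsClosed S) {a b : ℝ} (hab : a < b)
    (hsS : ∀ t ∈ Ioo a b, s t ∈ S) (hs : IntegrableOn s (Ioo a b))
    (hgs : IntegrableOn (fun t => g (s t)) (Ioo a b)) :
    g ((b - a)⁻¹ * ∫ t in a..b, s t) ≤ (b - a)⁻¹ * ∫ t in a..b, g (s t) := by
  have hvol : volume (Ioo a b) = ENNReal.ofReal (b - a) := Real.volume_Ioo
  have h := hg.map_set_average_le hgc hS (by simp [hvol, hab]) (by simp [hvol])
    (ae_restrict_of_forall_mem measurableSet_Ioo hsS) hs hgs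
  simpa only [setAverage_eq, Real.volume_real_Ioo_of_le hab.le, smul_eq_mul,
    integral_Ioo_eq_intervalIntegral hab.le] using h

noncomputable def cellMass (n : ℕ) (s : ℝ → ℝ) (i : Fin n) : ℝ :=
  ∫ t in ((i : ℝ) / n)..(((i : ℝ) + 1) / n), s t

section Cells

variable {n : ℕ} [NeZero n] {s : ℝ → ℝ}

lemma cell_right_le_one (i : Fin n) : ((i : ℝ) + 1) / n ≤ 1 :=
  (div_le_one (Nat.cast_pos.mpr (NeZero.pos n))).mpr <| by exact_mod_cast i.isLt

lemma cell_left_lt_right (i : Fin n) : (i : ℝ) / n < ((i : ℝ) + 1) / n := by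
  have : (0 : ℝ) < n := Nat.cast_pos.mpr (NeZero.pos n)
  gcongr
  linarith

lemma sum_cellMass (hs : IntervalIntegrable s volume 0 1) :
    ∑ i, cellMass n s i = ∫ t in (0 : ℝ)..1, s t := by
  have hpieces : ∀ k < n, IntervalIntegrable s volume ((k : ℝ) / n) (((k + 1 : ℕ) : ℝ) / n) :=
    fun k hk => hs.mono_set <| by
      rw [uIcc_of_le zero_le_one, uIcc_of_le (by gcongr; simp)]
      exact Icc_subset_Icc (by positivity) (by exact_mod_cast cell_right_le_one ⟨k, hk⟩)
  have := intervalIntegral.sum_integral_adjacent_intervals hpieces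
  unfold cellMass
  rw [Fin.sum_univ_eq_sum_range (fun k => ∫ t in ((k : ℝ) / n)..(((k : ℝ) + 1) / n), s t)]
  push_cast at this
  rw [this, zero_div, div_self (NeZero.ne _)]

lemma sum_map_mul_cellMass_div_le_integral {S : Set ℝ} {g : ℝ → ℝ}
    (hg : ConvexOn ℝ S g) (hgc : ContinuousOn g S) (hS : IsClosed S)
    (hsS : ∀ t ∈ Ioo 0 1, s t ∈ S) (hs : IntegrableOn s (Ioo 0 1))
    (hgs : IntegrableOn (fun t => g (s t)) (Ioo 0 1)) :
    ∑ i, g (n * cellMass n s i) / n ≤ ∫ t in Ioo 0 1, g (s t) := by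
  have hn : (0 : ℝ) < n := Nat.cast_pos.mpr (NeZero.pos n)
  have hcell : ∀ i : Fin n, Ioo ((i : ℝ) / n) (((i : ℝ) + 1) / n) ⊆ Ioo 0 1 := fun i =>
    Ioo_subset_Ioo (by positivity) (cell_right_le_one i)
  have hwidth : ∀ i : Fin n, ((((i : ℝ) + 1) / n) - (i : ℝ) / n)⁻¹ = n := fun i => by
    field_simp; ring
  have hjensen : ∀ i, g (n * cellMass n s i) / n ≤ cellMass n (fun t => g (s t)) i := fun i => by
    have h := hg.map_intervalAverage_le hgc hS (cell_left_lt_right i)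
      (fun t ht => hsS t (hcell i ht)) (hs.mono_set (hcell i)) (hgs.mono_set (hcell i))
    rw [hwidth] at h
    exact (div_le_iff₀' hn).mpr h
  calc ∑ i, g (n * cellMass n s i) / n ≤ ∑ i, cellMass n (fun t => g (s t)) i :=
        Finset.sum_le_sum fun i _ => hjensen i
    _ = ∫ t in Ioo 0 1, g (s t) := by
        rw [sum_cellMass ((intervalIntegrable_iff_integrableOn_Ioo_of_le zero_le_one).mpr hgs),
          integral_Ioo_eq_intervalIntegral zero_le_one]

lemma cellMass_nonneg (hs0 : ∀ t ∈ Ioo 0 1, 0 ≤ s t) (i : Fin n) : 0 ≤ cellMass n s i := by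
  rw [cellMass, ← integral_Ioo_eq_intervalIntegral (cell_left_lt_right i).le]
  exact setIntegral_nonneg measurableSet_Ioo fun t ht =>
    hs0 t (Ioo_subset_Ioo (by positivity) (cell_right_le_one i) ht)

lemma Om1_cellMass_le_integral_mul_log (hs0 : ∀ t ∈ Ioo 0 1, 0 ≤ s t)
    (hs : IntegrableOn s (Ioo 0 1))
    (hKL : IntegrableOn (fun t => s t * Real.log (s t)) (Ioo 0 1)) :
    Om1 (cellMass n s) ≤ ∫ t in Ioo 0 1, s t * Real.log (s t) := by
  have h := sum_map_mul_cellMass_div_le_integral (n := n) Real.convexOn_mul_log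
    Real.continuous_mul_log.continuousOn isClosed_Ici hs0 hs hKL
  simpa only [Om1, mul_div_right_comm, mul_div_cancel_left₀ _ (NeZero.ne _)] using h

lemma sum_sq_cellMass_sub_le_integral (hs : IntegrableOn s (Ioo 0 1))
    (hχ : IntegrableOn (fun t => (s t - 1) ^ 2) (Ioo 0 1)) :
    ∑ i, (cellMass n s i - 1 / n) ^ 2 ≤ 1 / (n : ℝ) * ∫ t in Ioo 0 1, (s t - 1) ^ 2 := by
  have h := sum_map_mul_cellMass_div_le_integral (n := n) (convexOn_sub_sq 1)
    (by fun_prop) isClosed_univ (fun t _ => mem_univ (s t)) hs hχ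
  have hn : (n : ℝ) ≠ 0 := NeZero.ne _
  have hterm : ∀ i, (cellMass n s i - 1 / n) ^ 2 = 1 / n * ((n * cellMass n s i - 1) ^ 2 / n) :=
    fun i => by field_simp
  rw [Finset.sum_congr rfl fun i _ => hterm i, ← Finset.mul_sum]
  gcongr

end Cells

/-- Smoothing-approximation bounds for the entropic and Euclidean
regularizers: `0 ≤ h − h_{νΩ₁} ≤ ν Ω₁(σ) ≤ ν KL(s‖u)` and
`0 ≤ h − h_{νΩ₂} ≤ (ν/2)‖σ − uₙ‖₂² ≤ (ν/(2n)) χ²(s‖u)`, where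
`σᵢ = ∫_{(i−1)/n}^{i/n} s(t) dt` for a probability density `s` on `(0,1)`,
`KL(s‖u) = ∫₀¹ s ln s` and `χ²(s‖u) = ∫₀¹ (s − 1)²`. -/
theorem stmt14 {n : ℕ} [NeZero n]
    (s : ℝ → ℝ)
    (hs_nonneg : ∀ t ∈ Set.Ioo (0 : ℝ) 1, 0 ≤ s t)
    (hs_density : ∫ t in Set.Ioo (0 : ℝ) 1, s t = 1)
    (hKL_int : MeasureTheory.IntegrableOn (fun t => s t * Real.log (s t)) (Set.Ioo (0 : ℝ) 1))
    (hchi_int : MeasureTheory.IntegrableOn (fun t => (s t - 1) ^ 2) (Set.Ioo (0 : ℝ) 1))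
    (σ : Fin n → ℝ) (hσ : ∀ i : Fin n, σ i = ∫ t in ((i : ℝ) / n)..(((i : ℝ) + 1) / n), s t)
    (ν : ℝ) (hν : 0 ≤ ν) (l : Fin n → ℝ) :
    (0 ≤ hmax σ l - smoothedMax σ Om1 ν l ∧
      hmax σ l - smoothedMax σ Om1 ν l ≤ ν * Om1 σ ∧
      Om1 σ ≤ ∫ t in Set.Ioo (0 : ℝ) 1, s t * Real.log (s t)) ∧
    (0 ≤ hmax σ l - smoothedMax σ Om2 ν l ∧
      hmax σ l - smoothedMax σ Om2 ν l ≤ ν / 2 * (∑ i, (σ i - 1 / n) ^ 2) ∧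
      (∑ i, (σ i - 1 / n) ^ 2) ≤ (1 / (n : ℝ)) * ∫ t in Set.Ioo (0 : ℝ) 1, (s t - 1) ^ 2) := by
  obtain rfl : σ = cellMass n s := funext hσ
  have hs : IntegrableOn s (Ioo 0 1) := Integrable.of_integral_ne_zero (by simp [hs_density])
  have hσ0 := cellMass_nonneg (n := n) hs_nonneg
  have hσ1 : ∑ i, cellMass n s i = 1 := by
    rw [sum_cellMass ((intervalIntegrable_iff_integrableOn_Ioo_of_le zero_le_one).mpr hs),
      ← integral_Ioo_eq_intervalIntegral zero_le_one, hs_density]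
  have hOm1 := hmax_sub_smoothedMax_mem_Icc (Om := Om1)
    (fun lam hlam => Om1_nonneg (apply_mem_of_mem_permutahedron (convex_Ici 0) hσ0 hlam)
      ((sum_eq_of_mem_permutahedron hlam).trans hσ1))
    (fun _ => Om1_le_of_mem_permutahedron hσ0) hν l
  have hOm2 := hmax_sub_smoothedMax_mem_Icc (σ := cellMass n s) (Om := Om2)
    (fun _ _ => by unfold Om2; positivity) (fun _ => Om2_le_of_mem_permutahedron) hν l
  refine ⟨⟨hOm1.1, hOm1.2, Om1_cellMass_le_integral_mul_log hs_nonneg hs hKL_int⟩,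
    hOm2.1, hOm2.2.trans_eq (by rw [Om2]; ring), sum_sq_cellMass_sub_le_integral hs hchi_int⟩
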